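/- For all natural numbers $m, d \ge 1$, $(\mathrm{vol}\,B_{2m}^d)^{m/d} \le 2^m (2em/d)^{1/2}$, where $B_{2m}^d = \{z \in \mathbb{R}^d : \sum_{j=1}^d |z_j|^{2m} \le 1\}$ and $\mathrm{vol}$ is Lebesgue measure. -/

import Mathlib

/-!
Dirichlet's formula gives `vol B_p^d = (2 Γ(1 + 1/p))^d / Γ(1 + d/p)`. Convexity of `Γ` between
`Γ 1 = Γ 2 = 1` gives `Γ(1 + 1/p) ≤ 1`, and the Stirling-type bound `Γ(1 + s) ≥ (s/e)^s` gives
`vol B_p^d ≤ 2^d (e p/d)^{d/p}`; with `p = 2m`, the power `m/d` turns `d/p` into `1/2`.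
-/

open MeasureTheory Real Set

theorem Real.Gamma_le_one_of_mem_Icc {x : ℝ} (hx : x ∈ Icc 1 2) : Gamma x ≤ 1 := by
  simpa [Gamma_two] using
    convexOn_Gamma.le_max_of_mem_Icc (mem_Ioi.2 one_pos) (mem_Ioi.2 two_pos) hx

/-- Truncate `Γ(s + 1) = ∫₀^∞ x^s e^{-x} dx` to `x > s`, where `x^s ≥ s^s`. -/
theorem Real.rpow_div_exp_le_Gamma_add_one {s : ℝ} (hs : 0 ≤ s) :
    (s / exp 1) ^ s ≤ Gamma (s + 1) := by
  have hint : IntegrableOn (fun x ↦ exp (-x) * x ^ s) (Ioi 0) := by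
    simpa using GammaIntegral_convergent (by linarith : 0 < s + 1)
  calc (s / exp 1) ^ s = ∫ x in Ioi s, exp (-x) * s ^ s := by
        rw [integral_mul_const, integral_exp_neg_Ioi, div_rpow hs (exp_pos 1).le, exp_one_rpow,
          exp_neg, div_eq_mul_inv, mul_comm]
    _ ≤ ∫ x in Ioi s, exp (-x) * x ^ s := by
        refine setIntegral_mono_on ?_ (hint.mono_set (Ioi_subset_Ioi hs)) measurableSet_Ioi
          fun x hx ↦ mul_le_mul_of_nonneg_left (rpow_le_rpow hs (le_of_lt hx) hs) (exp_pos _).le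
        simpa [IntegrableOn] using (exp_neg_integrableOn_Ioi s one_pos).mul_const (s ^ s)
    _ ≤ ∫ x in Ioi 0, exp (-x) * x ^ s :=
        setIntegral_mono_set hint
          (ae_restrict_of_forall_mem measurableSet_Ioi fun x hx ↦
            mul_nonneg (exp_pos _).le (rpow_nonneg (le_of_lt hx) _))
          (Ioi_subset_Ioi hs).eventuallyLE
    _ = Gamma (s + 1) := by
        rw [Gamma_eq_integral (by linarith)]; simp

theorem MeasureTheory.volume_sum_abs_pow_le_one (ι : Type*) [Fintype ι] [Nonempty ι] {n : ℕ}
    (hn : n ≠ 0) :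
    volume {x : ι → ℝ | ∑ i, |x i| ^ n ≤ 1} =
      .ofReal ((2 * Gamma (1 / n + 1)) ^ Fintype.card ι / Gamma (Fintype.card ι / n + 1)) := by
  have hn' : (0 : ℝ) < n := by positivity
  have hball : {x : ι → ℝ | ∑ i, |x i| ^ n ≤ 1} =
      {x : ι → ℝ | (∑ i, |x i| ^ (n : ℝ)) ^ (1 / (n : ℝ)) ≤ 1} := by
    ext x
    simp only [mem_ofPred_eq, rpow_natCast, one_div]
    rw [rpow_inv_le_iff_of_pos (by positivity) zero_le_one hn', one_rpow]
  rw [hball, volume_sum_rpow_le ι (by exact_mod_cast Nat.one_le_iff_ne_zero.2 hn) 1,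
    ENNReal.ofReal_one, one_pow, one_mul]

theorem MeasureTheory.volume_sum_abs_pow_le_one_le (ι : Type*) [Fintype ι] [Nonempty ι] {n : ℕ}
    (hn : n ≠ 0) :
    (volume {x : ι → ℝ | ∑ i, |x i| ^ n ≤ 1}).toReal ≤
      2 ^ Fintype.card ι * (exp 1 * n / Fintype.card ι) ^ ((Fintype.card ι : ℝ) / n) := by
  set k := Fintype.card ι
  have hGamma_one : Gamma (1 / n + 1) ≤ 1 := by
    refine Gamma_le_one_of_mem_Icc ⟨le_add_of_nonneg_left (by positivity), ?_⟩
    have : (1 : ℝ) ≤ n := by exact_mod_cast Nat.one_le_iff_ne_zero.2 hn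
    linarith [div_le_one_of_le₀ this (by positivity : (0 : ℝ) ≤ n)]
  rw [volume_sum_abs_pow_le_one ι hn, ENNReal.toReal_ofReal (by positivity)]
  calc (2 * Gamma (1 / n + 1)) ^ k / Gamma (k / n + 1)
      ≤ 2 ^ k / Gamma (k / n + 1) := by
        gcongr
        linarith
    _ ≤ 2 ^ k / (k / n / exp 1) ^ ((k : ℝ) / n) := by
        gcongr
        exact rpow_div_exp_le_Gamma_add_one (by positivity)
    _ = 2 ^ k * (exp 1 * n / k) ^ ((k : ℝ) / n) := by
        rw [div_eq_mul_inv, ← inv_rpow (by positivity), inv_div, div_div_eq_mul_div,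
          mul_comm (exp 1)]

/-- Upper volume estimate `(vol B_{2m}^d)^{m/d} ≤ 2^m (2em/d)^{1/2}`. -/
theorem stmt7 {m d : ℕ} (hm : 1 ≤ m) (hd : 1 ≤ d) :
    (volume {z : Fin d → ℝ | ∑ j, |z j| ^ (2 * m) ≤ 1}).toReal ^ ((m : ℝ) / d)
      ≤ 2 ^ m * Real.sqrt (2 * Real.exp 1 * m / d) := by
  have : Nonempty (Fin d) := Fin.pos_iff_nonempty.mp hd
  have hvol := volume_sum_abs_pow_le_one_le (Fin d) (n := 2 * m) (by omega)
  rw [Fintype.card_fin] at hvol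
  calc _ ≤ (2 ^ d * (exp 1 * ↑(2 * m) / d) ^ ((d : ℝ) / ↑(2 * m))) ^ ((m : ℝ) / d) :=
        rpow_le_rpow ENNReal.toReal_nonneg hvol (by positivity)
    _ = 2 ^ m * Real.sqrt (2 * Real.exp 1 * m / d) := by
        have hm' : (m : ℝ) ≠ 0 := by positivity
        have hd' : (d : ℝ) ≠ 0 := by positivity
        rw [mul_rpow (by positivity) (by positivity), ← rpow_natCast 2 d, ← rpow_mul zero_le_two,
          ← rpow_mul (by positivity), sqrt_eq_rpow, ← rpow_natCast 2 m]
        congr 1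
        · field_simp
        · push_cast; congr 1 <;> field_simp
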